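/- arXiv:1710.03841 — 4 statements merged into one kernel-verified Lean document; each statement's English description precedes it below -/
import Mathlib

section
/- Let E be a compact metric space, Ω = E^ℕ, p a fully supported Borel probability measure on E, f ∈ C(Ω), L_f the Ruelle operator, P(f) the pressure of f, and λ_f = exp(P(f)). If ν is a Borel probability measure on Ω and c > 0 satisfies ∫_Ω L_f φ dν = c ∫_Ω φ dν for all φ ∈ C(Ω), then c = λ_f. (Every positive eigenvalue of the transpose of L_f admitting a probability eigenmeasure equals the spectral radius exp(P(f)).) -/
open MeasureTheory Filter Topology

noncomputable section

/-- The sequence `(a, x₁, x₂, …)` obtained by prepending `a` to `x`. -/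
def cons {E : Type*} (a : E) (x : ℕ → E) : ℕ → E := fun n => Nat.casesOn n a x

lemma continuous_cons {E : Type*} [TopologicalSpace E] (x : ℕ → E) :
    Continuous (fun a : E => cons a x) := by
  apply continuous_pi
  intro n
  cases n with
  | zero => exact continuous_id
  | succ n => exact continuous_const

lemma integral_pos_of_pos {E : Type*} [MetricSpace E] [CompactSpace E] [MeasurableSpace E]
    [BorelSpace E] (p : Measure E) [IsProbabilityMeasure p]
    {g : E → ℝ} (hg : Continuous g) (hpos : ∀ a, 0 < g a) : 0 < ∫ a, g a ∂p := by
  have hne : Nonempty E := by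
    by_contra h
    have h0 : p Set.univ = 0 := by
      rw [Set.univ_eq_empty_iff.2 (not_nonempty_iff.1 h)]
      simp
    simp [measure_univ] at h0
  obtain ⟨a₀, -, ha₀⟩ := isCompact_univ.exists_isMinOn Set.univ_nonempty hg.continuousOn
  have hint : Integrable g p :=
    hg.integrable_of_hasCompactSupport (HasCompactSupport.of_compactSpace g)
  have h1 : (g a₀ : ℝ) ≤ ∫ a, g a ∂p := by
    have := integral_mono (integrable_const (g a₀)) hint (fun a => ha₀ (trivial))
    simpa using this
  exact lt_of_lt_of_le (hpos a₀) h1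

/-- Every positive eigenvalue of the transpose of `L_f` admitting a
probability eigenmeasure equals the spectral radius `λ_f = exp(P(f))`. -/
theorem eigenvalue_eq_exp_pressure
    {E : Type*} [MetricSpace E] [CompactSpace E] [MeasurableSpace E] [BorelSpace E]
    (p : Measure E) [IsProbabilityMeasure p]
    (hp : ∀ U : Set E, IsOpen U → U.Nonempty → 0 < p U)
    (f : C(ℕ → E, ℝ))
    (T : C(ℕ → E, ℝ) →L[ℝ] C(ℕ → E, ℝ))
    (hT : ∀ (φ : C(ℕ → E, ℝ)) (x : ℕ → E),
      T φ x = ∫ a, Real.exp (f (cons a x)) * φ (cons a x) ∂p)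
    (P : ℝ)
    (hP : TendstoUniformly (fun (n : ℕ) (x : ℕ → E) => Real.log ((T ^ n) 1 x) / n)
      (fun _ => P) atTop)
    (ν : Measure (ℕ → E)) [IsProbabilityMeasure ν] (c : ℝ) (hc : 0 < c)
    (hν : ∀ φ : C(ℕ → E, ℝ), ∫ x, T φ x ∂ν = c * ∫ x, φ x ∂ν) :
    c = Real.exp P := by
  have hpow : ∀ n : ℕ, (T ^ (n + 1)) 1 = T ((T ^ n) 1) := by
    intro n
    rw [pow_succ' T n]
    rfl
  have hposn : ∀ (n : ℕ) (x : ℕ → E), 0 < (T ^ n) 1 x := by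
    intro n
    induction n with
    | zero => intro x; simp
    | succ n ih =>
      intro x
      rw [hpow n, hT]
      apply integral_pos_of_pos p
      · exact (Real.continuous_exp.comp (f.continuous.comp (continuous_cons x))).mul
          (((T ^ n) 1).continuous.comp (continuous_cons x))
      · intro a
        exact mul_pos (Real.exp_pos _) (ih _)
  have hint : ∀ n : ℕ, ∫ x, (T ^ n) 1 x ∂ν = c ^ n := by
    intro n
    induction n with
    | zero => simp
    | succ n ih =>
      rw [hpow n, hν, ih, pow_succ, mul_comm]
  have key : ∀ ε : ℝ, 0 < ε → |Real.log c - P| ≤ ε := by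
    intro ε hε
    obtain ⟨N, hN⟩ := ((Metric.tendstoUniformly_iff.1 hP) ε hε).exists_forall_of_atTop
    set n := max N 1 with hn
    have hn1 : 1 ≤ n := le_max_right _ _
    have hnpos : (0 : ℝ) < (n : ℝ) := by exact_mod_cast hn1
    have hNn := hN n (le_max_left _ _)
    have hbnd : ∀ x, Real.exp ((P - ε) * n) ≤ (T ^ n) 1 x ∧
        (T ^ n) 1 x ≤ Real.exp ((P + ε) * n) := by
      intro x
      have h := hNn x
      rw [Real.dist_eq] at h
      obtain ⟨ha, hb⟩ := abs_lt.1 h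
      set L := Real.log ((T ^ n) 1 x) with hL
      have h1 : P - ε < L / n := by linarith
      have h2 : L / n < P + ε := by linarith
      have hL1 : (P - ε) * n ≤ L := le_of_lt ((lt_div_iff₀ hnpos).1 h1)
      have hL2 : L ≤ (P + ε) * n := le_of_lt ((div_lt_iff₀ hnpos).1 h2)
      have hx : (T ^ n) 1 x = Real.exp L := (Real.exp_log (hposn n x)).symm
      constructor
      · rw [hx]; exact Real.exp_le_exp.2 hL1
      · rw [hx]; exact Real.exp_le_exp.2 hL2
    have hintg : Integrable (fun x => (T ^ n) 1 x) ν :=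
      ((T ^ n) 1).continuous.integrable_of_hasCompactSupport
        (HasCompactSupport.of_compactSpace _)
    have hlow : Real.exp ((P - ε) * n) ≤ c ^ n := by
      rw [← hint n]
      have := integral_mono (integrable_const (Real.exp ((P - ε) * n))) hintg
        (fun x => (hbnd x).1)
      simpa using this
    have hhigh : c ^ n ≤ Real.exp ((P + ε) * n) := by
      rw [← hint n]
      have := integral_mono hintg (integrable_const (Real.exp ((P + ε) * n)))
        (fun x => (hbnd x).2)
      simpa using this
    have hcn : (0 : ℝ) < c ^ n := pow_pos hc n
    have hlog1 : (P - ε) * n ≤ (n : ℝ) * Real.log c := by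
      have := (Real.le_log_iff_exp_le hcn).2 hlow
      rwa [Real.log_pow] at this
    have hlog2 : (n : ℝ) * Real.log c ≤ (P + ε) * n := by
      have := (Real.log_le_iff_le_exp hcn).2 hhigh
      rwa [Real.log_pow] at this
    rw [abs_le]
    constructor
    · nlinarith
    · nlinarith
  have hlogc : Real.log c = P := by
    have h0 : |Real.log c - P| ≤ 0 := by
      refine le_of_forall_pos_le_add ?_
      intro ε hε
      simpa using key ε hε
    have := abs_nonpos_iff.1 (h0)
    linarith [sub_eq_zero.1 this]
  rw [← hlogc, Real.exp_log hc]
end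
end

section
/- Let E be a compact metric space, Ω = E^ℕ, p a fully supported Borel probability measure on E, f ∈ C(Ω), L_f the Ruelle operator, P(f) the pressure, and λ_f = exp(P(f)). Suppose there exists a Baire-class-one function ψ : Ω → ℝ (i.e., ψ is the pointwise limit of a sequence of continuous functions) and constants 0 < m ≤ M < ∞ with m ≤ ψ(x) ≤ M for all x ∈ Ω, such that ∫_E exp(f(a·x)) ψ(a·x) dp(a) = λ_f ψ(x) for every x ∈ Ω. Then the norm closure in C(Ω)* of the range of L_f* − λ_f·Id (i.e., of { g ∘ L_f − λ_f g : g ∈ C(Ω)* }) contains no functional of the form φ ↦ ∫_Ω φ dμ with μ a Borel probability measure on Ω. -/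
/-!
The operator `T` is positive and `T ψ = λ ψ` for the bounded, bounded-below eigenfunction `ψ`, so
comparing `1` with `ψ` gives `(m / M) λⁿ ≤ Tⁿ 1 ≤ (M / m) λⁿ` pointwise. If a probability functional
`Λ` were within `ε` of `g ∘ T - λ g`, testing at `Tⁿ 1` would give
`g (Tⁿ⁺¹ 1) - λ g (Tⁿ 1) ≥ (m / M - ε M / m) λⁿ`; for small `ε` this makes `g (Tⁿ 1) / λⁿ` grow
linearly in `n`, whereas it is bounded by `‖g‖ M / m`.
-/

open MeasureTheory Filter Topology NormedSpace

noncomputable section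

lemma exists_mul_pow_lt_of_le_mul_add {a : ℕ → ℝ} {lam d : ℝ} (hlam : 0 < lam) (hd : 0 < d)
    (h : ∀ n, lam * a n + lam ^ n * d ≤ a (n + 1)) (K : ℝ) : ∃ n : ℕ, K * lam ^ n < a n := by
  have hgrow : ∀ n : ℕ, a 0 + n * (d / lam) ≤ a n / lam ^ n := by
    intro n
    induction n with
    | zero => simp
    | succ n ih =>
      have hstep : a n / lam ^ n + d / lam ≤ a (n + 1) / lam ^ (n + 1) := by
        rw [le_div_iff₀ (by positivity), pow_succ]
        calc (a n / lam ^ n + d / lam) * (lam ^ n * lam) = lam * a n + lam ^ n * d := by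
              field_simp
          _ ≤ a (n + 1) := h n
      push_cast
      linarith
  obtain ⟨n, hn⟩ := exists_nat_gt ((K - a 0) / (d / lam))
  refine ⟨n, (lt_div_iff₀ (by positivity)).mp ?_⟩
  have := (div_lt_iff₀ (by positivity : 0 < d / lam)).mp hn
  linarith [hgrow n]

theorem notMem_closure_comp_sub_smul_of_orbit_bounds {X : Type*} [NormedAddCommGroup X]
    [NormedSpace ℝ X] (T : X →L[ℝ] X) {lam c C : ℝ} (hlam : 0 < lam) (hc : 0 < c) {v : X}
    (hup : ∀ n : ℕ, ‖(T ^ n) v‖ ≤ C * lam ^ n) (Λ : StrongDual ℝ X)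
    (hlow : ∀ n : ℕ, c * lam ^ n ≤ Λ ((T ^ n) v)) :
    Λ ∉ closure {h : StrongDual ℝ X | ∃ g : StrongDual ℝ X, h = g.comp T - lam • g} := by
  intro hmem
  have hC : 0 ≤ C := by simpa using (norm_nonneg v).trans (hup 0)
  obtain ⟨_, ⟨g, rfl⟩, hdist⟩ := Metric.mem_closure_iff.mp hmem (c / (C + 1)) (by positivity)
  set ε := dist Λ (g.comp T - lam • g) with hε
  have hεC : ε * C < c := by
    have := (lt_div_iff₀ (by positivity : (0 : ℝ) < C + 1)).mp hdist
    nlinarith [dist_nonneg (x := Λ) (y := g.comp T - lam • g)]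
  have hrec : ∀ n : ℕ, lam * g ((T ^ n) v) + lam ^ n * (c - ε * C) ≤ g ((T ^ (n + 1)) v) := by
    intro n
    have happrox : Λ ((T ^ n) v) - (g ((T ^ (n + 1)) v) - lam * g ((T ^ n) v)) ≤ ε * (C * lam ^ n) :=
      calc _ = (Λ - (g.comp T - lam • g)) ((T ^ n) v) := by
              simp [pow_succ', smul_eq_mul]
        _ ≤ ‖(Λ - (g.comp T - lam • g)) ((T ^ n) v)‖ := Real.le_norm_self _
        _ ≤ ε * ‖(T ^ n) v‖ := by rw [hε, dist_eq_norm]; exact ContinuousLinearMap.le_opNorm _ _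
        _ ≤ ε * (C * lam ^ n) := by gcongr; exact hup n
    nlinarith [hlow n]
  obtain ⟨n, hn⟩ := exists_mul_pow_lt_of_le_mul_add hlam (by linarith) hrec (‖g‖ * C)
  have hbound : g ((T ^ n) v) ≤ ‖g‖ * (C * lam ^ n) :=
    calc _ ≤ ‖g ((T ^ n) v)‖ := Real.le_norm_self _
      _ ≤ ‖g‖ * ‖(T ^ n) v‖ := g.le_opNorm _
      _ ≤ ‖g‖ * (C * lam ^ n) := by gcongr; exact hup n
  linarith [mul_assoc ‖g‖ C (lam ^ n)]

lemma continuous_cons_left {E : Type*} [TopologicalSpace E] (x : ℕ → E) :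
    Continuous fun a : E => cons a x :=
  continuous_pi fun n => by cases n; exacts [continuous_id, continuous_const]

lemma integrable_of_continuous_of_compactSpace {X : Type*} [TopologicalSpace X] [CompactSpace X]
    [MeasurableSpace X] [OpensMeasurableSpace X] (μ : Measure X) [IsFiniteMeasure μ] {g : X → ℝ}
    (hg : Continuous g) : Integrable g μ :=
  hg.integrable_of_hasCompactSupport (HasCompactSupport.of_compactSpace g)

section RuellePositivity

variable {E : Type*} [TopologicalSpace E] [CompactSpace E] [MeasurableSpace E]
  [OpensMeasurableSpace E] {p : Measure E} [IsFiniteMeasure p] {f : C(ℕ → E, ℝ)}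
  {T : C(ℕ → E, ℝ) →L[ℝ] C(ℕ → E, ℝ)} {ψ : (ℕ → E) → ℝ} {lam : ℝ}

lemma integrable_exp_mul_comp_cons (φ : C(ℕ → E, ℝ)) (x : ℕ → E) :
    Integrable (fun a => Real.exp (f (cons a x)) * φ (cons a x)) p := by
  have := continuous_cons_left x
  exact integrable_of_continuous_of_compactSpace p (by fun_prop)

section Eigenfunction

variable
  (hT : ∀ (φ : C(ℕ → E, ℝ)) (x : ℕ → E), T φ x = ∫ a, Real.exp (f (cons a x)) * φ (cons a x) ∂p)
  (hψ : ∀ x, Integrable (fun a => Real.exp (f (cons a x)) * ψ (cons a x)) p)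
  (heig : ∀ x, ∫ a, Real.exp (f (cons a x)) * ψ (cons a x) ∂p = lam * ψ x)

include hT hψ heig

lemma apply_le_of_le_mul_eigen {φ : C(ℕ → E, ℝ)} {c : ℝ} (h : ∀ y, φ y ≤ c * ψ y) (x : ℕ → E) :
    T φ x ≤ c * lam * ψ x := by
  rw [hT, mul_assoc, ← heig, ← integral_const_mul]
  refine integral_mono (integrable_exp_mul_comp_cons φ x) ((hψ x).const_mul c) fun a => ?_
  have := mul_le_mul_of_nonneg_left (h (cons a x)) (Real.exp_pos (f (cons a x))).le
  linarith

lemma le_apply_of_mul_eigen_le {φ : C(ℕ → E, ℝ)} {c : ℝ} (h : ∀ y, c * ψ y ≤ φ y) (x : ℕ → E) :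
    c * lam * ψ x ≤ T φ x := by
  rw [hT, mul_assoc, ← heig, ← integral_const_mul]
  refine integral_mono ((hψ x).const_mul c) (integrable_exp_mul_comp_cons φ x) fun a => ?_
  have := mul_le_mul_of_nonneg_left (h (cons a x)) (Real.exp_pos (f (cons a x))).le
  linarith

lemma pow_apply_le_of_le_mul_eigen {φ : C(ℕ → E, ℝ)} {c : ℝ} (h : ∀ y, φ y ≤ c * ψ y)
    (n : ℕ) (x : ℕ → E) : (T ^ n) φ x ≤ c * lam ^ n * ψ x := by
  induction n generalizing x with
  | zero => simpa using h x
  | succ n ih =>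
    rw [pow_succ' T n, mul_apply_eq_comp, pow_succ, ← mul_assoc]
    exact apply_le_of_le_mul_eigen hT hψ heig ih x

lemma le_pow_apply_of_mul_eigen_le {φ : C(ℕ → E, ℝ)} {c : ℝ} (h : ∀ y, c * ψ y ≤ φ y)
    (n : ℕ) (x : ℕ → E) : c * lam ^ n * ψ x ≤ (T ^ n) φ x := by
  induction n generalizing x with
  | zero => simpa using h x
  | succ n ih =>
    rw [pow_succ' T n, mul_apply_eq_comp, pow_succ, ← mul_assoc]
    exact le_apply_of_mul_eigen_le hT hψ heig ih x

lemma mul_pow_le_pow_apply_one {m M : ℝ} (hlam : 0 ≤ lam) (hM : 0 < M)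
    (hbounds : ∀ x, m ≤ ψ x ∧ ψ x ≤ M) (n : ℕ) (x : ℕ → E) :
    m / M * lam ^ n ≤ (T ^ n) 1 x :=
  calc m / M * lam ^ n = 1 / M * lam ^ n * m := by ring
    _ ≤ 1 / M * lam ^ n * ψ x := by gcongr; exact (hbounds x).1
    _ ≤ (T ^ n) 1 x := le_pow_apply_of_mul_eigen_le hT hψ heig (fun y => by
        rw [one_div_mul_eq_div, ContinuousMap.one_apply, div_le_one hM]; exact (hbounds y).2) n x

lemma pow_apply_one_le_mul_pow {m M : ℝ} (hlam : 0 ≤ lam) (hm : 0 < m)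
    (hbounds : ∀ x, m ≤ ψ x ∧ ψ x ≤ M) (n : ℕ) (x : ℕ → E) :
    (T ^ n) 1 x ≤ M / m * lam ^ n :=
  calc (T ^ n) 1 x ≤ 1 / m * lam ^ n * ψ x := pow_apply_le_of_le_mul_eigen hT hψ heig (fun y => by
        rw [one_div_mul_eq_div, ContinuousMap.one_apply, one_le_div hm]; exact (hbounds y).1) n x
    _ ≤ 1 / m * lam ^ n * M := by gcongr; exact (hbounds x).2
    _ = M / m * lam ^ n := by ring

lemma norm_pow_apply_one_le {m M : ℝ} (hlam : 0 ≤ lam) (hm : 0 < m) (hM : 0 < M)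
    (hbounds : ∀ x, m ≤ ψ x ∧ ψ x ≤ M) (n : ℕ) : ‖(T ^ n) 1‖ ≤ M / m * lam ^ n := by
  refine (ContinuousMap.norm_le _ (by positivity)).mpr fun x => ?_
  rw [Real.norm_eq_abs, abs_le]
  have hlow := mul_pow_le_pow_apply_one hT hψ heig hlam hM hbounds n x
  have : 0 ≤ m / M * lam ^ n + M / m * lam ^ n := by positivity
  exact ⟨by linarith, pow_apply_one_le_mul_pow hT hψ heig hlam hm hbounds n x⟩

end Eigenfunction

end RuellePositivity

theorem closure_range_misses_probabilities_general
    {E : Type*} [MetricSpace E] [CompactSpace E] [MeasurableSpace E] [BorelSpace E]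
    (p : Measure E) [IsProbabilityMeasure p]
    (f : C(ℕ → E, ℝ))
    (T : C(ℕ → E, ℝ) →L[ℝ] C(ℕ → E, ℝ))
    (hT : ∀ (φ : C(ℕ → E, ℝ)) (x : ℕ → E),
      T φ x = ∫ a, Real.exp (f (cons a x)) * φ (cons a x) ∂p)
    (P : ℝ)
    (ψ : (ℕ → E) → ℝ)
    (m M : ℝ) (hm : 0 < m) (hmM : m ≤ M)
    (hbounds : ∀ x, m ≤ ψ x ∧ ψ x ≤ M)
    (heig : ∀ x : ℕ → E,
      ∫ a, Real.exp (f (cons a x)) * ψ (cons a x) ∂p = Real.exp P * ψ x) :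
    ∀ μ : Measure (ℕ → E), IsProbabilityMeasure μ →
      ∀ Λ : StrongDual ℝ C(ℕ → E, ℝ), (∀ φ : C(ℕ → E, ℝ), Λ φ = ∫ x, φ x ∂μ) →
        Λ ∉ closure {h : StrongDual ℝ C(ℕ → E, ℝ) |
          ∃ g : StrongDual ℝ C(ℕ → E, ℝ), h = g.comp T - Real.exp P • g} := by
  intro μ _ Λ hΛ
  have hM : 0 < M := hm.trans_le hmM
  have hlam : 0 ≤ Real.exp P := (Real.exp_pos P).le
  -- A non-integrable function has Bochner integral `0`, while `exp P * ψ x > 0`.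
  have hψ : ∀ x, Integrable (fun a => Real.exp (f (cons a x)) * ψ (cons a x)) p := fun x =>
    .of_integral_ne_zero <| by
      rw [heig]; exact (mul_pos (Real.exp_pos P) (hm.trans_le (hbounds x).1)).ne'
  refine notMem_closure_comp_sub_smul_of_orbit_bounds T (Real.exp_pos P) (div_pos hm hM)
    (norm_pow_apply_one_le hT hψ heig hlam hm hM hbounds) Λ fun n => ?_
  rw [hΛ]
  calc m / M * Real.exp P ^ n = ∫ _, m / M * Real.exp P ^ n ∂μ := by simp
    _ ≤ ∫ x, (T ^ n) 1 x ∂μ := integral_mono (integrable_const _)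
        (integrable_of_continuous_of_compactSpace μ ((T ^ n) 1).continuous)
        (mul_pow_le_pow_apply_one hT hψ heig hlam hM hbounds n)

/-- If there is a bounded Baire-class-one eigenfunction
`ψ` (with `0 < m ≤ ψ ≤ M`) of the Ruelle operator associated to `λ_f = exp(P(f))`, then the
norm closure of the range of `L_f* − λ_f·Id` contains no functional given by integration
against a Borel probability measure on `Ω`. -/
theorem closure_range_misses_probabilities
    {E : Type*} [MetricSpace E] [CompactSpace E] [MeasurableSpace E] [BorelSpace E]
    (p : Measure E) [IsProbabilityMeasure p]
    (hp : ∀ U : Set E, IsOpen U → U.Nonempty → 0 < p U)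
    (f : C(ℕ → E, ℝ))
    (T : C(ℕ → E, ℝ) →L[ℝ] C(ℕ → E, ℝ))
    (hT : ∀ (φ : C(ℕ → E, ℝ)) (x : ℕ → E),
      T φ x = ∫ a, Real.exp (f (cons a x)) * φ (cons a x) ∂p)
    (P : ℝ)
    (hP : TendstoUniformly (fun (n : ℕ) (x : ℕ → E) => Real.log ((T ^ n) 1 x) / n)
      (fun _ => P) atTop)
    (ψ : (ℕ → E) → ℝ)
    (hBaire : ∃ u : ℕ → C(ℕ → E, ℝ), ∀ x, Tendsto (fun n => u n x) atTop (nhds (ψ x)))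
    (m M : ℝ) (hm : 0 < m) (hmM : m ≤ M)
    (hbounds : ∀ x, m ≤ ψ x ∧ ψ x ≤ M)
    (heig : ∀ x : ℕ → E,
      ∫ a, Real.exp (f (cons a x)) * ψ (cons a x) ∂p = Real.exp P * ψ x) :
    ∀ μ : Measure (ℕ → E), IsProbabilityMeasure μ →
      ∀ Λ : StrongDual ℝ C(ℕ → E, ℝ), (∀ φ : C(ℕ → E, ℝ), Λ φ = ∫ x, φ x ∂μ) →
        Λ ∉ closure {h : StrongDual ℝ C(ℕ → E, ℝ) |
          ∃ g : StrongDual ℝ C(ℕ → E, ℝ), h = g.comp T - Real.exp P • g} :=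
  closure_range_misses_probabilities_general p f T hT P ψ m M hm hmM hbounds heig
end
end

section
/- (Theorem A) Let E be a compact metric space, Ω = E^ℕ, p a fully supported Borel probability measure on E, f ∈ C(Ω), L_f the Ruelle operator, λ_f = exp(P(f)), and ν ∈ G*(f). Let T : L¹(Ω, ν) → L¹(Ω, ν) be the bounded linear operator extending L_f, i.e., T maps the class of φ to the class of L_f φ for every φ ∈ C(Ω). Then there exists ξ ∈ (L¹(Ω, ν))** such that: (i) T** ξ = λ_f ξ; (ii) ξ is positive, i.e., ξ(g) ≥ 0 for every g ∈ (L¹(Ω, ν))* satisfying g(φ) ≥ 0 for all φ ∈ L¹(Ω, ν) with φ ≥ 0 ν-a.e.; and (iii) ξ(ν̂) = 1, where ν̂ ∈ (L¹(Ω, ν))* is the functional φ ↦ ∫_Ω φ dν. -/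
/-! With `λ = exp P`, the normalized iterates `uₙ = λ⁻ⁿ L_fⁿ 1` are nonnegative and, because `ν` is
an eigenmeasure, have `ν`-integral `1`; so they lie on the unit sphere of `L¹(ν)`, and
`S uₙ = λ uₙ₊₁`. Their Cesàro means `v_N` are bounded and `S v_N - λ v_N = (λ / N) (u_N - u₀) → 0`.
A weak-* cluster point `ξ` of the `v_N` in the bidual therefore satisfies `S** ξ = λ ξ`, and it
inherits positivity and `ξ(ν̂) = 1` from the `v_N`. -/

open MeasureTheory Filter Topology NormedSpace

noncomputable section

section CesaroMean

variable {X : Type*} [AddCommGroup X] [Module ℝ X]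

def cesaroMean (u : ℕ → X) (N : ℕ) : X := (N : ℝ)⁻¹ • ∑ n ∈ Finset.range N, u n

theorem map_cesaroMean {Y F : Type*} [AddCommGroup Y] [Module ℝ Y] [FunLike F X Y]
    [LinearMapClass F ℝ X Y] (g : F)
    (u : ℕ → X) (N : ℕ) : g (cesaroMean u N) = cesaroMean (fun n => g (u n)) N := by
  simp only [cesaroMean, map_smul, map_sum]

theorem cesaroMean_const {N : ℕ} (hN : N ≠ 0) (x : X) : cesaroMean (fun _ => x) N = x := by
  rw [cesaroMean, Finset.sum_const, Finset.card_range, ← Nat.cast_smul_eq_nsmul ℝ, smul_smul,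
    inv_mul_cancel₀ (Nat.cast_ne_zero.2 hN), one_smul]

theorem cesaroMean_smul (c : ℝ) (u : ℕ → X) (N : ℕ) :
    cesaroMean (fun n => c • u n) N = c • cesaroMean u N := by
  simp only [cesaroMean, ← Finset.smul_sum, smul_comm c]

theorem cesaroMean_succ_sub (u : ℕ → X) (N : ℕ) :
    cesaroMean (fun n => u (n + 1)) N - cesaroMean u N = (N : ℝ)⁻¹ • (u N - u 0) := by
  rw [cesaroMean, cesaroMean, ← smul_sub, ← Finset.sum_sub_distrib, Finset.sum_range_sub]

theorem cesaroMean_nonneg {u : ℕ → ℝ} (hu : ∀ n, 0 ≤ u n) (N : ℕ) : 0 ≤ cesaroMean u N :=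
  smul_nonneg (by positivity) (Finset.sum_nonneg fun n _ => hu n)

end CesaroMean

section NormedCesaroMean

variable {X : Type*} [NormedAddCommGroup X] [NormedSpace ℝ X] {u : ℕ → X} {C : ℝ}

theorem norm_cesaroMean_le (hu : ∀ n, ‖u n‖ ≤ C) (N : ℕ) : ‖cesaroMean u N‖ ≤ C := by
  rcases N.eq_zero_or_pos with rfl | hN
  · simpa [cesaroMean] using (norm_nonneg _).trans (hu 0)
  · calc ‖cesaroMean u N‖ ≤ (N : ℝ)⁻¹ * ∑ n ∈ Finset.range N, ‖u n‖ := by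
          rw [cesaroMean, norm_smul, Real.norm_of_nonneg (by positivity)]
          gcongr
          exact norm_sum_le _ _
      _ ≤ (N : ℝ)⁻¹ * ∑ n ∈ Finset.range N, C := by gcongr with n; exact hu n
      _ = C := by field_simp; simp

theorem tendsto_cesaroMean_succ_sub (hu : ∀ n, ‖u n‖ ≤ C) :
    Tendsto (fun N => cesaroMean (fun n => u (n + 1)) N - cesaroMean u N) atTop (𝓝 0) := by
  simp_rw [cesaroMean_succ_sub]
  have hbdd : ∀ N, ‖u N - u 0‖ ≤ 2 * C := fun N => by
    linarith [norm_sub_le (u N) (u 0), hu N, hu 0]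
  refine squeeze_zero_norm (fun N => ?_)
    (by simpa using (tendsto_inv_atTop_zero.comp tendsto_natCast_atTop_atTop).mul_const (2 * C))
  rw [norm_smul, Real.norm_of_nonneg (by positivity)]
  exact mul_le_mul_of_nonneg_left (hbdd N) (by positivity)

end NormedCesaroMean

-- Banach–Alaoglu: `v` lies in a weak-* compact ball of the bidual.
theorem exists_ultrafilter_tendsto_bidual_of_bounded {𝕜 X : Type*} [NontriviallyNormedField 𝕜]
    [ProperSpace 𝕜] [NormedAddCommGroup X] [NormedSpace 𝕜 X] {v : ℕ → X} {C : ℝ}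
    (hv : ∀ n, ‖v n‖ ≤ C) :
    ∃ (ξ : StrongDual 𝕜 (StrongDual 𝕜 X)) (U : Ultrafilter ℕ), (U : Filter ℕ) ≤ atTop ∧
      ∀ g : StrongDual 𝕜 X, Tendsto (fun n => g (v n)) U (𝓝 (ξ g)) := by
  let w : ℕ → WeakDual 𝕜 (StrongDual 𝕜 X) := fun n => inclusionInDoubleDual 𝕜 X (v n)
  let K := WeakDual.toStrongDual ⁻¹' Metric.closedBall (0 : StrongDual 𝕜 (StrongDual 𝕜 X)) C
  have hw : w ⁻¹' K ∈ Ultrafilter.of (atTop : Filter ℕ) := univ_mem' fun n =>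
    (mem_closedBall_zero_iff (a := (inclusionInDoubleDual 𝕜 X (v n) : StrongDual 𝕜 _))).2
      ((double_dual_bound 𝕜 X (v n)).trans (hv n))
  obtain ⟨ξ, -, hξ⟩ := (WeakDual.isCompact_closedBall 0 C).ultrafilter_le_nhds _
    (le_principal_iff.2 (Ultrafilter.mem_map.2 hw))
  exact ⟨ξ, _, Ultrafilter.of_le _, tendsto_iff_forall_eval_tendsto_topDualPairing.1 hξ⟩

theorem exists_bidual_eigenvector_of_orbit {X : Type*} [NormedAddCommGroup X] [NormedSpace ℝ X]
    (S : X →L[ℝ] X) (c : ℝ) {u : ℕ → X} {C : ℝ} (hu : ∀ n, ‖u n‖ ≤ C)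
    (hSu : ∀ n, S (u n) = c • u (n + 1)) :
    ∃ ξ : StrongDual ℝ (StrongDual ℝ X),
      (∀ g : StrongDual ℝ X, ξ (g.comp S) = c * ξ g) ∧
      (∀ g : StrongDual ℝ X, (∀ n, 0 ≤ g (u n)) → 0 ≤ ξ g) ∧
      (∀ (g : StrongDual ℝ X) (a : ℝ), (∀ n, g (u n) = a) → ξ g = a) := by
  obtain ⟨ξ, U, hU, hξ⟩ :=
    exists_ultrafilter_tendsto_bidual_of_bounded (𝕜 := ℝ) (norm_cesaroMean_le hu)
  refine ⟨ξ, fun g => ?_, fun g hg => ?_, fun g a hg => ?_⟩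
  · have hSmean : ∀ N, S (cesaroMean u N) = c • cesaroMean u N +
        c • (cesaroMean (fun n => u (n + 1)) N - cesaroMean u N) := fun N => by
      rw [map_cesaroMean, funext hSu, cesaroMean_smul, ← smul_add, add_sub_cancel]
    have hsmall : Tendsto (fun N => g (cesaroMean (fun n => u (n + 1)) N - cesaroMean u N))
        atTop (𝓝 0) :=
      (g.continuous.tendsto' 0 0 (map_zero g)).comp (tendsto_cesaroMean_succ_sub hu)
    refine tendsto_nhds_unique (hξ _) ?_
    simp only [ContinuousLinearMap.comp_apply, hSmean, map_add, map_smul, smul_eq_mul]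
    simpa using ((hξ g).const_mul c).add ((hsmall.mono_left hU).const_mul c)
  · exact ge_of_tendsto' (hξ g) fun N => by
      rw [map_cesaroMean]
      exact cesaroMean_nonneg hg N
  · refine tendsto_nhds_unique (hξ g) (tendsto_const_nhds.congr' ?_)
    filter_upwards [hU (eventually_ne_atTop 0)] with N hN
    rw [map_cesaroMean, funext hg, cesaroMean_const hN]

theorem MeasureTheory.L1.norm_eq_integral_of_nonneg {X : Type*} [MeasurableSpace X]
    {μ : Measure X} {f : Lp ℝ 1 μ} (hf : 0 ≤ f) : ‖f‖ = ∫ x, f x ∂μ := by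
  rw [L1.norm_eq_integral_norm]
  refine integral_congr_ae ?_
  filter_upwards [(Lp.coeFn_nonneg _).2 hf] with x hx
  exact Real.norm_of_nonneg hx

section ContinuousMapToL1

variable {X : Type*} [TopologicalSpace X] [CompactSpace X] [MeasurableSpace X] [BorelSpace X]
  {μ : Measure X} [IsFiniteMeasure μ]

theorem ContinuousMap.toLp_nonneg {ψ : C(X, ℝ)} (hψ : 0 ≤ ψ) :
    0 ≤ ContinuousMap.toLp 1 μ ℝ ψ := by
  rw [← Lp.coeFn_nonneg]
  filter_upwards [ContinuousMap.coeFn_toLp (p := 1) (𝕜 := ℝ) μ ψ] with x hx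
  exact hx ▸ hψ x

theorem ContinuousMap.integral_toLp (ψ : C(X, ℝ)) :
    ∫ x, ContinuousMap.toLp 1 μ ℝ ψ x ∂μ = ∫ x, ψ x ∂μ :=
  integral_congr_ae (ContinuousMap.coeFn_toLp μ ψ)

end ContinuousMapToL1

theorem ContinuousLinearMap.pow_apply_nonneg {M : Type*} [AddCommMonoid M] [Module ℝ M]
    [TopologicalSpace M] [Preorder M] {T : M →L[ℝ] M} (hT : ∀ φ, 0 ≤ φ → 0 ≤ T φ) (n : ℕ)
    {φ : M} (hφ : 0 ≤ φ) :
    0 ≤ (T ^ n) φ := by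
  induction n with
  | zero => exact hφ
  | succ n ih => rw [pow_succ', mul_apply_eq_comp]; exact hT _ ih

theorem ruelle_apply_nonneg {E : Type*} [TopologicalSpace E] [MeasurableSpace E]
    {p : Measure E} {f : C(ℕ → E, ℝ)} {T : C(ℕ → E, ℝ) →L[ℝ] C(ℕ → E, ℝ)}
    (hT : ∀ (φ : C(ℕ → E, ℝ)) (x : ℕ → E),
      T φ x = ∫ a, Real.exp (f (cons a x)) * φ (cons a x) ∂p)
    {φ : C(ℕ → E, ℝ)} (hφ : 0 ≤ φ) : 0 ≤ T φ := fun x => by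
  change 0 ≤ T φ x
  rw [hT]
  exact integral_nonneg fun a => mul_nonneg (Real.exp_pos _).le (hφ _)

theorem integral_pow_apply {X : Type*} [TopologicalSpace X] [MeasurableSpace X]
    {ν : Measure X} {T : C(X, ℝ) →L[ℝ] C(X, ℝ)} {c : ℝ}
    (hν : ∀ φ : C(X, ℝ), ∫ x, T φ x ∂ν = c * ∫ x, φ x ∂ν) (n : ℕ) (φ : C(X, ℝ)) :
    ∫ x, (T ^ n) φ x ∂ν = c ^ n * ∫ x, φ x ∂ν := by
  induction n with
  | zero => simp
  | succ n ih => rw [pow_succ', mul_apply_eq_comp, hν, ih, pow_succ']; ring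

theorem exists_positive_eigenvector_bidual_L1_general
    {E : Type*} [MetricSpace E] [CompactSpace E] [MeasurableSpace E] [BorelSpace E]
    (p : Measure E)
    (f : C(ℕ → E, ℝ))
    (T : C(ℕ → E, ℝ) →L[ℝ] C(ℕ → E, ℝ))
    (hT : ∀ (φ : C(ℕ → E, ℝ)) (x : ℕ → E),
      T φ x = ∫ a, Real.exp (f (cons a x)) * φ (cons a x) ∂p)
    (P : ℝ)
    (ν : Measure (ℕ → E)) [IsProbabilityMeasure ν]
    (hν : ∀ φ : C(ℕ → E, ℝ), ∫ x, T φ x ∂ν = Real.exp P * ∫ x, φ x ∂ν)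
    (S : Lp ℝ 1 ν →L[ℝ] Lp ℝ 1 ν)
    (hS : ∀ φ : C(ℕ → E, ℝ),
      S (ContinuousMap.toLp 1 ν ℝ φ) = ContinuousMap.toLp 1 ν ℝ (T φ)) :
    ∃ ξ : StrongDual ℝ (StrongDual ℝ (Lp ℝ 1 ν)),
      (∀ g : StrongDual ℝ (Lp ℝ 1 ν), ξ (g.comp S) = Real.exp P * ξ g) ∧
      (∀ g : StrongDual ℝ (Lp ℝ 1 ν), (∀ φ : Lp ℝ 1 ν, 0 ≤ φ → 0 ≤ g φ) → 0 ≤ ξ g) ∧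
      (∀ νhat : StrongDual ℝ (Lp ℝ 1 ν), (∀ φ : Lp ℝ 1 ν, νhat φ = ∫ x, φ x ∂ν) → ξ νhat = 1) := by
  set c := Real.exp P
  have hc : c ≠ 0 := (Real.exp_pos P).ne'
  set ψ : ℕ → C(ℕ → E, ℝ) := fun n => (c ^ n)⁻¹ • (T ^ n) 1
  have hψ_nonneg : ∀ n, 0 ≤ ψ n := fun n =>
    smul_nonneg (by positivity) (T.pow_apply_nonneg (fun _ => ruelle_apply_nonneg hT) n zero_le_one)
  have hψ_integral : ∀ n, ∫ x, ψ n x ∂ν = 1 := fun n => by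
    simp only [ψ, ContinuousMap.smul_apply, smul_eq_mul, integral_const_mul,
      integral_pow_apply hν]
    simp [hc]
  have hTψ : ∀ n, T (ψ n) = c • ψ (n + 1) := fun n => by
    simp only [ψ, map_smul, smul_smul, pow_succ', mul_apply_eq_comp]
    rw [mul_inv, ← mul_assoc, mul_inv_cancel₀ hc, one_mul]
  set u : ℕ → Lp ℝ 1 ν := fun n => ContinuousMap.toLp 1 ν ℝ (ψ n)
  have hu_nonneg : ∀ n, 0 ≤ u n := fun n => ContinuousMap.toLp_nonneg (hψ_nonneg n)
  have hu_integral : ∀ n, ∫ x, u n x ∂ν = 1 := fun n => by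
    rw [ContinuousMap.integral_toLp, hψ_integral]
  obtain ⟨ξ, heig, hpos, hconst⟩ := exists_bidual_eigenvector_of_orbit S c (u := u) (C := 1)
    (fun n => by rw [L1.norm_eq_integral_of_nonneg (hu_nonneg n), hu_integral])
    (fun n => by simp only [u, hS, hTψ, map_smul])
  exact ⟨ξ, heig, fun g hg => hpos g fun n => hg _ (hu_nonneg n),
    fun νhat hνhat => hconst νhat 1 fun n => by rw [hνhat, hu_integral]⟩

/-- **Theorem A.** Let `ν ∈ G*(f)` and let `S` be the bounded extension of the
Ruelle operator to `L¹(Ω, ν)`. Then there exists a positive `ξ ∈ (L¹(Ω, ν))**` with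
`S** ξ = λ_f ξ` and `ξ(ν̂) = 1`, where `ν̂ : φ ↦ ∫ φ dν`. -/
theorem exists_positive_eigenvector_bidual_L1
    {E : Type*} [MetricSpace E] [CompactSpace E] [MeasurableSpace E] [BorelSpace E]
    (p : Measure E) [IsProbabilityMeasure p]
    (hp : ∀ U : Set E, IsOpen U → U.Nonempty → 0 < p U)
    (f : C(ℕ → E, ℝ))
    (T : C(ℕ → E, ℝ) →L[ℝ] C(ℕ → E, ℝ))
    (hT : ∀ (φ : C(ℕ → E, ℝ)) (x : ℕ → E),
      T φ x = ∫ a, Real.exp (f (cons a x)) * φ (cons a x) ∂p)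
    (P : ℝ)
    (hP : TendstoUniformly (fun (n : ℕ) (x : ℕ → E) => Real.log ((T ^ n) 1 x) / n)
      (fun _ => P) atTop)
    (ν : Measure (ℕ → E)) [IsProbabilityMeasure ν]
    (hν : ∀ φ : C(ℕ → E, ℝ), ∫ x, T φ x ∂ν = Real.exp P * ∫ x, φ x ∂ν)
    (S : Lp ℝ 1 ν →L[ℝ] Lp ℝ 1 ν)
    (hS : ∀ φ : C(ℕ → E, ℝ),
      S (ContinuousMap.toLp 1 ν ℝ φ) = ContinuousMap.toLp 1 ν ℝ (T φ)) :
    ∃ ξ : StrongDual ℝ (StrongDual ℝ (Lp ℝ 1 ν)),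
      (∀ g : StrongDual ℝ (Lp ℝ 1 ν), ξ (g.comp S) = Real.exp P * ξ g) ∧
      (∀ g : StrongDual ℝ (Lp ℝ 1 ν), (∀ φ : Lp ℝ 1 ν, 0 ≤ φ → 0 ≤ g φ) → 0 ≤ ξ g) ∧
      (∀ νhat : StrongDual ℝ (Lp ℝ 1 ν), (∀ φ : Lp ℝ 1 ν, νhat φ = ∫ x, φ x ∂ν) → ξ νhat = 1) :=
  exists_positive_eigenvector_bidual_L1_general p f T hT P ν hν S hS
end
end

section
/- (Shift invariance, Theorem 4.1) Let E be a compact metric space, Ω = E^ℕ, σ the left shift, p a fully supported Borel probability measure on E, f ∈ C(Ω), L_f the Ruelle operator, λ_f = exp(P(f)), and ν ∈ G*(f). Let T : L¹(Ω, ν) → L¹(Ω, ν) be a bounded linear operator such that for every φ ∈ L¹(Ω, ν), (T φ)(x) = ∫_E exp(f(a·x)) φ(a·x) dp(a) for ν-a.e. x. Suppose ξ ∈ (L¹(Ω, ν))** satisfies T** ξ = λ_f ξ. For a Borel set A ⊆ Ω, let Λ_A ∈ (L¹(Ω, ν))* be the functional φ ↦ ∫_A φ dν. Then for every Borel set A,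 ξ(Λ_{σ^{-1}(A)}) = ξ(Λ_A); in particular the set function μ(A) := ξ(Λ_A) is shift invariant. -/
/-!
Pushing `ν ⊗ p` forward along `(x, a) ↦ a·x` and weighting by `e^f` gives a finite measure
whose integral of `φ` is `∫ L_f φ dν`. The eigen-equation says it agrees with `λ_f ν` on continuous
functions, hence as a measure, so `∫ L_f ψ dν = λ_f ∫ ψ dν` for every `ψ ∈ L¹(ν)`. Since
`1_A(x) = 1_{σ⁻¹A}(a·x)`, we get `1_A · L_f ψ = L_f (1_{σ⁻¹A} ψ)` and therefore
`Λ_A ∘ S = λ_f Λ_{σ⁻¹A}`. Applying `ξ` and `S** ξ = λ_f ξ` gives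
`λ_f ξ(Λ_A) = λ_f ξ(Λ_{σ⁻¹A})`, and `λ_f > 0`.
-/

open MeasureTheory Filter Topology NormedSpace

noncomputable section

/-- The left shift `σ(x₁, x₂, x₃, …) = (x₂, x₃, …)`. -/
def shift {E : Type*} (x : ℕ → E) : ℕ → E := fun n => x (n + 1)

open scoped NNReal ENNReal

theorem shift_cons {E : Type*} (a : E) (x : ℕ → E) : shift (cons a x) = x := rfl

section Ruelle

variable {E : Type*} [MeasurableSpace E]

theorem measurable_shift : Measurable (shift : (ℕ → E) → ℕ → E) :=
  measurable_pi_lambda _ fun n => measurable_pi_apply (n + 1)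

theorem measurable_cons_uncurry : Measurable fun q : (ℕ → E) × E => cons q.2 q.1 := by
  refine measurable_pi_lambda _ fun n => ?_
  cases n with
  | zero => exact measurable_snd
  | succ m => exact (measurable_pi_apply m).comp measurable_fst

def ruelle (p : Measure E) (f φ : (ℕ → E) → ℝ) (x : ℕ → E) : ℝ :=
  ∫ a, Real.exp (f (cons a x)) * φ (cons a x) ∂p

def ruelleDualMeasure (p : Measure E) (f : (ℕ → E) → ℝ) (ν : Measure (ℕ → E)) :
    Measure (ℕ → E) :=
  ((ν.prod p).map fun q => cons q.2 q.1).withDensity fun y => ENNReal.ofReal (Real.exp (f y))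

theorem indicator_ruelle (p : Measure E) (f φ : (ℕ → E) → ℝ) (A : Set (ℕ → E)) :
    A.indicator (ruelle p f φ) = ruelle p f ((shift ⁻¹' A).indicator φ) := by
  ext x
  by_cases hx : x ∈ A <;> simp [ruelle, Set.indicator, shift_cons, hx]

theorem integral_ruelleDualMeasure (p : Measure E) [SFinite p] {f : (ℕ → E) → ℝ}
    (hf : Measurable f) (ν : Measure (ℕ → E)) [SFinite ν] {ψ : (ℕ → E) → ℝ}
    (hψ : StronglyMeasurable ψ) (hi : Integrable ψ (ruelleDualMeasure p f ν)) :
    ∫ y, ψ y ∂ruelleDualMeasure p f ν = ∫ x, ruelle p f ψ x ∂ν := by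
  set c : (ℕ → E) × E → ℕ → E := fun q => cons q.2 q.1
  set w : (ℕ → E) → ℝ≥0 := fun y => (Real.exp (f y)).toNNReal
  have hw : Measurable w := (Real.measurable_exp.comp hf).real_toNNReal
  have hwψ : StronglyMeasurable fun y => w y • ψ y := hw.coe_nnreal_real.stronglyMeasurable.smul hψ
  have hi' : Integrable (fun q => w (c q) • ψ (c q)) (ν.prod p) :=
    (integrable_map_measure hwψ.aestronglyMeasurable measurable_cons_uncurry.aemeasurable).mp
      ((integrable_withDensity_iff_integrable_smul hw).mp hi)
  calc ∫ y, ψ y ∂ruelleDualMeasure p f ν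
      = ∫ y, w y • ψ y ∂(ν.prod p).map c := integral_withDensity_eq_integral_smul hw ψ
    _ = ∫ q, w (c q) • ψ (c q) ∂ν.prod p :=
        integral_map measurable_cons_uncurry.aemeasurable hwψ.aestronglyMeasurable
    _ = ∫ x, ∫ a, w (cons a x) • ψ (cons a x) ∂p ∂ν := integral_prod _ hi'
    _ = ∫ x, ruelle p f ψ x ∂ν := by
        simp only [w, NNReal.smul_def, Real.coe_toNNReal _ (Real.exp_nonneg _), smul_eq_mul]
        rfl

end Ruelle

section CompactAlphabet

variable {E : Type*} [MetricSpace E] [CompactSpace E] [MeasurableSpace E] [BorelSpace E]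
  (p : Measure E) [IsFiniteMeasure p] (f : C(ℕ → E, ℝ)) (ν : Measure (ℕ → E)) [IsFiniteMeasure ν]

theorem isFiniteMeasure_ruelleDualMeasure : IsFiniteMeasure (ruelleDualMeasure p f ν) := by
  refine isFiniteMeasure_withDensity_ofReal (Integrable.hasFiniteIntegral ?_)
  exact (Real.continuous_exp.comp f.continuous).integrable_of_hasCompactSupport
    (HasCompactSupport.of_compactSpace _)

theorem ruelleDualMeasure_eq_smul {c : ℝ} (hc : 0 ≤ c)
    (hν : ∀ φ : C(ℕ → E, ℝ), ∫ x, ruelle p f φ x ∂ν = c * ∫ x, φ x ∂ν) :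
    ruelleDualMeasure p f ν = ENNReal.ofReal c • ν := by
  have := isFiniteMeasure_ruelleDualMeasure p f ν
  have := ν.smul_finite (ENNReal.ofReal_ne_top (r := c))
  refine ext_of_forall_integral_eq_of_IsFiniteMeasure fun φ => ?_
  rw [integral_ruelleDualMeasure p f.continuous.measurable ν φ.continuous.stronglyMeasurable
    (φ.integrable _), integral_smul_measure, ENNReal.toReal_ofReal hc, smul_eq_mul]
  exact hν φ.toContinuousMap

theorem integral_ruelle_eq_mul_integral {c : ℝ} (hc : 0 ≤ c)
    (hν : ∀ φ : C(ℕ → E, ℝ), ∫ x, ruelle p f φ x ∂ν = c * ∫ x, φ x ∂ν) {ψ : (ℕ → E) → ℝ}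
    (hψ : StronglyMeasurable ψ) (hi : Integrable ψ ν) :
    ∫ x, ruelle p f ψ x ∂ν = c * ∫ x, ψ x ∂ν := by
  have hμ := ruelleDualMeasure_eq_smul p f ν hc hν
  rw [← integral_ruelleDualMeasure p f.continuous.measurable ν hψ
    (hμ ▸ hi.smul_measure ENNReal.ofReal_ne_top), hμ, integral_smul_measure,
    ENNReal.toReal_ofReal hc, smul_eq_mul]

theorem setIntegral_ruelle_eq {c : ℝ} (hc : 0 ≤ c)
    (hν : ∀ φ : C(ℕ → E, ℝ), ∫ x, ruelle p f φ x ∂ν = c * ∫ x, φ x ∂ν) {A : Set (ℕ → E)}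
    (hA : MeasurableSet A) {ψ : (ℕ → E) → ℝ} (hψ : StronglyMeasurable ψ) (hi : Integrable ψ ν) :
    ∫ x in A, ruelle p f ψ x ∂ν = c * ∫ x in shift ⁻¹' A, ψ x ∂ν := by
  have hA' := measurable_shift hA
  rw [← integral_indicator hA, indicator_ruelle, integral_ruelle_eq_mul_integral p f ν hc hν
    (hψ.indicator hA') (hi.indicator hA'), integral_indicator hA']

end CompactAlphabet

theorem bidual_eigenvector_gives_invariant_measure_general
    {E : Type*} [MetricSpace E] [CompactSpace E] [MeasurableSpace E] [BorelSpace E]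
    (p : Measure E) [IsProbabilityMeasure p]
    (f : C(ℕ → E, ℝ))
    (T : C(ℕ → E, ℝ) →L[ℝ] C(ℕ → E, ℝ))
    (hT : ∀ (φ : C(ℕ → E, ℝ)) (x : ℕ → E),
      T φ x = ∫ a, Real.exp (f (cons a x)) * φ (cons a x) ∂p)
    (P : ℝ)
    (ν : Measure (ℕ → E)) [IsProbabilityMeasure ν]
    (hν : ∀ φ : C(ℕ → E, ℝ), ∫ x, T φ x ∂ν = Real.exp P * ∫ x, φ x ∂ν)
    (S : Lp ℝ 1 ν →L[ℝ] Lp ℝ 1 ν)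
    (hS : ∀ φ : Lp ℝ 1 ν, ∀ᵐ x ∂ν,
      S φ x = ∫ a, Real.exp (f (cons a x)) * φ (cons a x) ∂p)
    (ξ : StrongDual ℝ (StrongDual ℝ (Lp ℝ 1 ν)))
    (hξ : ∀ g : StrongDual ℝ (Lp ℝ 1 ν), ξ (g.comp S) = Real.exp P * ξ g) :
    ∀ A : Set (ℕ → E), MeasurableSet A →
      ∀ Λσ ΛA : StrongDual ℝ (Lp ℝ 1 ν),
        (∀ φ : Lp ℝ 1 ν, Λσ φ = ∫ x in shift ⁻¹' A, φ x ∂ν) →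
        (∀ φ : Lp ℝ 1 ν, ΛA φ = ∫ x in A, φ x ∂ν) →
        ξ Λσ = ξ ΛA := by
  intro A hA Λσ ΛA hΛσ hΛA
  have hν' (φ : C(ℕ → E, ℝ)) : ∫ x, ruelle p f φ x ∂ν = Real.exp P * ∫ x, φ x ∂ν := by
    simpa only [ruelle, hT] using hν φ
  have hΛS : ΛA.comp S = Real.exp P • Λσ := by
    ext φ
    calc ΛA (S φ) = ∫ x in A, ruelle p f φ x ∂ν :=
          (hΛA _).trans (setIntegral_congr_ae hA ((hS φ).mono fun _ hx _ => hx))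
      _ = Real.exp P * ∫ x in shift ⁻¹' A, φ x ∂ν :=
          setIntegral_ruelle_eq p f ν (Real.exp_nonneg P) hν' hA (Lp.stronglyMeasurable φ)
            (L1.integrable_coeFn φ)
      _ = (Real.exp P • Λσ) φ := by rw [smul_apply, hΛσ, smul_eq_mul]
  have hξΛA := hξ ΛA
  rw [hΛS, map_smul, smul_eq_mul] at hξΛA
  exact mul_left_cancel₀ (Real.exp_ne_zero P) hξΛA

/-- **Shift invariance.** Let `ν ∈ G*(f)`, let `S` be the extension of the
Ruelle operator to `L¹(Ω, ν)` and suppose `ξ ∈ (L¹(Ω, ν))**` satisfies `S** ξ = λ_f ξ`.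
If `Λ_A : φ ↦ ∫_A φ dν`, then `ξ(Λ_{σ⁻¹(A)}) = ξ(Λ_A)` for every Borel set `A`; in
particular `A ↦ ξ(Λ_A)` is shift invariant. -/
theorem bidual_eigenvector_gives_invariant_measure
    {E : Type*} [MetricSpace E] [CompactSpace E] [MeasurableSpace E] [BorelSpace E]
    (p : Measure E) [IsProbabilityMeasure p]
    (hp : ∀ U : Set E, IsOpen U → U.Nonempty → 0 < p U)
    (f : C(ℕ → E, ℝ))
    (T : C(ℕ → E, ℝ) →L[ℝ] C(ℕ → E, ℝ))
    (hT : ∀ (φ : C(ℕ → E, ℝ)) (x : ℕ → E),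
      T φ x = ∫ a, Real.exp (f (cons a x)) * φ (cons a x) ∂p)
    (P : ℝ)
    (hP : TendstoUniformly (fun (n : ℕ) (x : ℕ → E) => Real.log ((T ^ n) 1 x) / n)
      (fun _ => P) atTop)
    (ν : Measure (ℕ → E)) [IsProbabilityMeasure ν]
    (hν : ∀ φ : C(ℕ → E, ℝ), ∫ x, T φ x ∂ν = Real.exp P * ∫ x, φ x ∂ν)
    (S : Lp ℝ 1 ν →L[ℝ] Lp ℝ 1 ν)
    (hS : ∀ φ : Lp ℝ 1 ν, ∀ᵐ x ∂ν,
      S φ x = ∫ a, Real.exp (f (cons a x)) * φ (cons a x) ∂p)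
    (ξ : StrongDual ℝ (StrongDual ℝ (Lp ℝ 1 ν)))
    (hξ : ∀ g : StrongDual ℝ (Lp ℝ 1 ν), ξ (g.comp S) = Real.exp P * ξ g) :
    ∀ A : Set (ℕ → E), MeasurableSet A →
      ∀ Λσ ΛA : StrongDual ℝ (Lp ℝ 1 ν),
        (∀ φ : Lp ℝ 1 ν, Λσ φ = ∫ x in shift ⁻¹' A, φ x ∂ν) →
        (∀ φ : Lp ℝ 1 ν, ΛA φ = ∫ x in A, φ x ∂ν) →
        ξ Λσ = ξ ΛA :=
  bidual_eigenvector_gives_invariant_measure_general p f T hT P ν hν S hS ξ hξ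
end
end
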